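/- arXiv:2304.10995 — 2 statements merged into one kernel-verified Lean document; each statement's English description precedes it below -/
import Mathlib

section
/- Let G = (V, E) be a finite graph with weighted color lists, where each color graph G_j is complete, and let H be the bipartite graph on V ⊔ Z versus C (Z a set of |C| − |V| dummy vertices joined to all colors), with edge (v,j) for j ∈ L(v) weighted w_j and edges from Z weighted 0. Then for every minimum-weight perfect matching M of H, the induced function f_M (defined by f_M(v) = j when (v,j) ∈ M) is a minimum-weight list coloring of (G, L, w), where the weight of a list coloring f is the sum of w_j over all colors j in the image of f. -/
/-- A perfect matching of the auxiliary bipartite graph `H` (on parts `V ⊕ Z` and `C`,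
where `v` is joined to the colors of `L v` and dummy vertices of `Z` are joined to all
colors) is modeled as a bijection `g : V ⊕ Z ≃ C` such that `g (Sum.inl v) ∈ L v`.
Its weight is `∑ v, w (g (Sum.inl v))` (edges from `Z` have weight zero). -/
theorem stmt_3 {V Z C : Type*} [Fintype V] [Fintype Z] [Fintype C] [DecidableEq C]
    (G : SimpleGraph V) (L : V → Set C) (w : C → ℕ)
    (hcomplete : ∀ j : C, ∀ a b : V, j ∈ L a → j ∈ L b → a ≠ b → G.Adj a b)
    (g : (V ⊕ Z) ≃ C)
    (hg : ∀ v : V, g (Sum.inl v) ∈ L v)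
    (hmin : ∀ g' : (V ⊕ Z) ≃ C, (∀ v : V, g' (Sum.inl v) ∈ L v) →
      ∑ v : V, w (g (Sum.inl v)) ≤ ∑ v : V, w (g' (Sum.inl v))) :
    ((∀ v : V, g (Sum.inl v) ∈ L v) ∧
      (∀ x y : V, G.Adj x y → g (Sum.inl x) ≠ g (Sum.inl y))) ∧
    (∀ f : V → C, (∀ v, f v ∈ L v) → (∀ x y, G.Adj x y → f x ≠ f y) →
      ∑ j ∈ Finset.univ.image (fun v : V => g (Sum.inl v)), w j ≤
        ∑ j ∈ Finset.univ.image f, w j) := by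
  classical
  have ginj : Function.Injective (fun v : V => g (Sum.inl v)) := by
    intro a b hab
    exact Sum.inl.inj (g.injective hab)
  refine ⟨⟨hg, fun x y hxy h => (G.ne_of_adj hxy) (ginj h)⟩, ?_⟩
  intro f hf hproper
  have finj : Function.Injective f := by
    intro a b hab
    by_contra hne
    exact hproper a b (hcomplete (f a) a b (hf a) (hab ▸ hf b) hne) hab
  -- extend f to a bijection g'
  have hcard : Fintype.card Z = Fintype.card ((Set.range f)ᶜ : Set C) := by
    have h1 : Fintype.card V + Fintype.card Z = Fintype.card C := by
      simpa [Fintype.card_sum] using Fintype.card_congr g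
    have h2 : Fintype.card (Set.range f) = Fintype.card V :=
      Set.card_range_of_injective finj
    have h3 : Fintype.card ((Set.range f)ᶜ : Set C)
        = Fintype.card C - Fintype.card (Set.range f) := Fintype.card_compl_set _
    omega
  let eZ : Z ≃ ((Set.range f)ᶜ : Set C) := Fintype.equivOfCardEq hcard
  let g' : (V ⊕ Z) ≃ C :=
    ((Equiv.ofInjective f finj).sumCongr eZ).trans (Equiv.Set.sumCompl (Set.range f))
  have hg' : ∀ v : V, g' (Sum.inl v) = f v := fun v => rfl
  have hle : ∑ v : V, w (g (Sum.inl v)) ≤ ∑ v : V, w (f v) := by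
    have := hmin g' (fun v => by rw [hg' v]; exact hf v)
    simpa [hg'] using this
  calc ∑ j ∈ Finset.univ.image (fun v : V => g (Sum.inl v)), w j
      = ∑ v : V, w (g (Sum.inl v)) :=
        Finset.sum_image (fun a _ b _ h => ginj h)
    _ ≤ ∑ v : V, w (f v) := hle
    _ = ∑ j ∈ Finset.univ.image f, w j :=
        (Finset.sum_image (fun a _ b _ h => finj h)).symm
end

section
/- Let x* be a basic optimal solution of the linear relaxation LR of the set-covering formulation (variables x^k_S ≥ 0 over pairs (S,k) with S a nonempty stable set of G_k; constraints Σ_{(S,k): v∈S} x^k_S ≥ 1 for each vertex v and Σ_{S} x^k_S ≤ m(k) for each color k). If x* has some fractional component, then there exists a pair (S, k) with |S| ≥ 2 such that x*^k_S is fractional (i.e., 0 < x*^k_S < 1 is not integral). -/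
/-- Index set of the set-covering LP: pairs `(S, k)` where `S` is a nonempty stable set of
the color graph `G_k` (the subgraph of `G` induced by `V_k`). -/
abbrev StabIdx {V K : Type*} (G : SimpleGraph V) (Vset : K → Finset V) :=
  {p : Finset V × K // p.1.Nonempty ∧ p.1 ⊆ Vset p.2 ∧
    ∀ a ∈ p.1, ∀ b ∈ p.1, ¬ G.Adj a b}

noncomputable instance {V K : Type*} [Fintype V] [Fintype K] {G : SimpleGraph V}
    {Vset : K → Finset V} : Fintype (StabIdx G Vset) := Fintype.ofFinite _

/-- Feasible region of the LP relaxation `LR` of the set-covering formulation. -/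
def scFeas {V K : Type*} [Fintype V] [DecidableEq V] [Fintype K] [DecidableEq K]
    (G : SimpleGraph V) (Vset : K → Finset V) (m : K → ℕ) :
    Set (StabIdx G Vset → ℝ) :=
  {x | (∀ p, 0 ≤ x p) ∧
       (∀ v : V, 1 ≤ ∑ p : StabIdx G Vset, if v ∈ p.1.1 then x p else 0) ∧
       (∀ k : K, (∑ p : StabIdx G Vset, if p.1.2 = k then x p else 0) ≤ (m k : ℝ))}

/-- Objective of `LR`: `∑ w_k x^k_S`. -/
noncomputable def scObj {V K : Type*} [Fintype V] [Fintype K]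
    (G : SimpleGraph V) (Vset : K → Finset V) (w : K → ℕ)
    (x : StabIdx G Vset → ℝ) : ℝ :=
  ∑ p : StabIdx G Vset, (w p.1.2 : ℝ) * x p

/-!
If every variable indexed by a stable set of size at least two is integral, every fractional
variable `x^k_{{v}}` lies in exactly one covering row (that of `v`) and one capacity row (that
of `k`). A tight row has an integral right-hand side, so it cannot contain exactly one
fractional variable. In the bipartite multigraph whose edges are the fractional variables and
whose vertices are the rows, the tight rows therefore have degree `0` or at least `2`; counting
edges shows that, restricted to the fractional variables, the tight rows are fewer than the
variables or linearly dependent (the vertex rows and the color rows have the same sum). So a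
nonzero direction `d` supported on the fractional variables keeps every tight row tight, and
`x ± ε d` are feasible for small `ε > 0`: `x` is not an extreme point. This replaces the
total unimodularity of the reduced constraint matrix.
-/

open Finset Filter Topology Matrix

theorem Matrix.exists_ne_zero_mulVec_eq_zero_of_card_lt {m n 𝕜 : Type*} [Fintype m] [Fintype n]
    [Field 𝕜] (M : Matrix m n 𝕜) {F : Finset n} (h : Fintype.card m < #F) :
    ∃ v : n → 𝕜, v ≠ 0 ∧ (∀ i ∉ F, v i = 0) ∧ M *ᵥ v = 0 := by
  classical
  let f := M.mulVecLin ∘ₗ Function.ExtendByZero.linearMap 𝕜 ((↑) : F → n)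
  obtain ⟨w, hw, hw0⟩ := (Submodule.ne_bot_iff _).1 <|
    LinearMap.ker_ne_bot_of_finrank_lt (f := f) (by simpa using h)
  refine ⟨Function.extend ((↑) : F → n) w 0, ?_,
    fun i hi ↦ Function.extend_apply' _ _ _ (by simpa), LinearMap.mem_ker.1 hw⟩
  contrapose! hw0
  funext i
  simpa [Subtype.val_injective.extend_apply] using congrFun hw0 i

theorem AddSubgroup.two_le_card_filter_notMem {G ι : Type*} [AddCommGroup G]
    (S : AddSubgroup G) {s : Finset ι} {f : ι → G} [DecidablePred (f · ∈ S)]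
    (hs : ∑ i ∈ s, f i ∈ S) (hne : ∃ i ∈ s, f i ∉ S) : 2 ≤ #{i ∈ s | f i ∉ S} := by
  obtain ⟨j, hjs, hj⟩ := hne
  by_contra! hlt
  have hout : {i ∈ s | f i ∉ S} = {j} :=
    eq_singleton_iff_unique_mem.2 ⟨mem_filter.2 ⟨hjs, hj⟩, fun i hi ↦
      card_le_one.1 (by omega) i hi j (mem_filter.2 ⟨hjs, hj⟩)⟩
  rw [← sum_filter_add_sum_filter_not s (f · ∈ S), hout, sum_singleton] at hs
  exact hj <| (add_mem_cancel_left <| sum_mem fun i hi ↦ (mem_filter.1 hi).2).1 hs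

theorem two_mul_card_le_card_filter_mem {ι α : Type*} [DecidableEq α] {F : Finset ι} {r : ι → α} {A : Finset α}
    (hA : ∀ a ∈ A, 2 ≤ #{i ∈ F | r i = a}) : 2 * #A ≤ #{i ∈ F | r i ∈ A} :=
  mul_card_image_le_card_of_maps_to (fun i hi ↦ (mem_filter.1 hi).2) 2 fun a ha ↦ by
    rw [filter_filter]
    convert hA a ha using 2
    exact filter_congr fun i _ ↦ and_iff_right_of_imp fun h ↦ h ▸ ha

section Fibers

variable {ι α β 𝕜 : Type*} [Fintype ι] [DecidableEq α] [DecidableEq β] [Field 𝕜]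

theorem exists_ne_zero_fiber_sums_eq_zero_of_card_lt (F : Finset ι) (r₁ : ι → α)
    (r₂ : ι → β) (A : Finset α) (B : Finset β) (h : #A + #B < #F) :
    ∃ d : ι → 𝕜, d ≠ 0 ∧ (∀ i ∉ F, d i = 0) ∧ (∀ a ∈ A, ∑ i ∈ F with r₁ i = a, d i = 0) ∧
      ∀ b ∈ B, ∑ i ∈ F with r₂ i = b, d i = 0 := by
  let M : Matrix (A ⊕ B) ι 𝕜 :=
    Sum.elim (fun a i ↦ if r₁ i = a then 1 else 0) (fun b i ↦ if r₂ i = b then 1 else 0)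
  obtain ⟨d, hd, hdF, hM⟩ := M.exists_ne_zero_mulVec_eq_zero_of_card_lt (by simpa using h)
  have hrow : ∀ (p : ι → Prop) [DecidablePred p],
      ∑ i ∈ F with p i, d i = ∑ i, (if p i then 1 else 0) * d i := by
    intro p _
    rw [sum_filter, sum_subset (subset_univ F) fun i _ hi ↦ by simp [hdF i hi]]
    simp
  refine ⟨d, hd, hdF, fun a ha ↦ ?_, fun b hb ↦ ?_⟩
  · simpa [hrow, M, mulVec, dotProduct] using congrFun hM (.inl ⟨a, ha⟩)
  · simpa [hrow, M, mulVec, dotProduct] using congrFun hM (.inr ⟨b, hb⟩)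

theorem exists_ne_zero_fiber_sums_eq_zero {F : Finset ι} (hF : F.Nonempty) (r₁ : ι → α)
    (r₂ : ι → β) {A : Finset α} {B : Finset β} (hA : ∀ a ∈ A, 2 ≤ #{i ∈ F | r₁ i = a})
    (hB : ∀ b ∈ B, 2 ≤ #{i ∈ F | r₂ i = b}) :
    ∃ d : ι → 𝕜, d ≠ 0 ∧ (∀ i ∉ F, d i = 0) ∧ (∀ a ∈ A, ∑ i ∈ F with r₁ i = a, d i = 0) ∧
      ∀ b ∈ B, ∑ i ∈ F with r₂ i = b, d i = 0 := by
  by_cases hlt : #A + #B < #F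
  · exact exists_ne_zero_fiber_sums_eq_zero_of_card_lt (𝕜 := 𝕜) F r₁ r₂ A B hlt
  have hA' := two_mul_card_le_card_filter_mem hA
  have hB' := two_mul_card_le_card_filter_mem hB
  have hA'' := card_filter_le F (r₁ · ∈ A)
  have hB'' := card_filter_le F (r₂ · ∈ B)
  have hFA : ∀ i ∈ F, r₁ i ∈ A := card_filter_eq_iff.1 (by omega)
  have hFB : ∀ i ∈ F, r₂ i ∈ B := card_filter_eq_iff.1 (by omega)
  obtain ⟨i₀, hi₀⟩ := hF
  have ha₀ := hFA i₀ hi₀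
  have := card_pos.2 ⟨_, ha₀⟩
  obtain ⟨d, hd, hdF, hdA, hdB⟩ := exists_ne_zero_fiber_sums_eq_zero_of_card_lt (𝕜 := 𝕜) F r₁ r₂
    (A.erase (r₁ i₀)) B (by rw [card_erase_of_mem ha₀]; omega)
  refine ⟨d, hd, hdF, fun a ha ↦ ?_, hdB⟩
  rcases eq_or_ne a (r₁ i₀) with rfl | hne
  · -- Every column of `F` lies in a row of `A` and in a row of `B`, so the rows of `A` and the
    -- rows of `B` both sum to `∑ i ∈ F, d i`: the row dropped from `A` is redundant.
    have h := (sum_fiberwise_of_maps_to hFA d).trans (sum_fiberwise_of_maps_to hFB d).symm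
    rwa [← add_sum_erase A _ ha, sum_eq_zero hdA, sum_eq_zero hdB, add_zero] at h
  · exact hdA a (mem_erase.2 ⟨hne, ha⟩)

end Fibers

section Rows

variable {ι α β 𝕜 : Type*} [Fintype ι] [DecidableEq α] [DecidableEq β] [Field 𝕜]
  {F : Finset ι} {P : ι → Prop} [DecidablePred P] {r : ι → α} {a : α}

theorem sum_ite_eq_sum_fiber {d : ι → 𝕜} (hdF : ∀ i ∉ F, d i = 0)
    (hP : ∀ i ∈ F, P i ↔ r i = a) :
    ∑ i, (if P i then d i else 0) = ∑ i ∈ F with r i = a, d i := by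
  rw [← sum_subset (subset_univ F) fun i _ hi ↦ by simp [hdF i hi], sum_filter]
  exact sum_congr rfl fun i hi ↦ if_congr (hP i hi) rfl rfl

theorem two_le_card_fiber_of_sum_mem (S : AddSubgroup 𝕜) {x : ι → 𝕜}
    (hF : ∀ i, i ∈ F ↔ x i ∉ S) (hP : ∀ i ∈ F, P i ↔ r i = a) (ha : a ∈ F.image r)
    (hrow : ∑ i, (if P i then x i else 0) ∈ S) : 2 ≤ #{i ∈ F | r i = a} := by
  classical
  obtain ⟨i, hi, rfl⟩ := mem_image.1 ha
  convert S.two_le_card_filter_notMem (s := {i | P i}) (by rwa [sum_filter])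
    ⟨i, mem_filter.2 ⟨mem_univ i, (hP i hi).2 rfl⟩, (hF i).1 hi⟩ using 2
  ext j
  simp only [mem_filter, mem_univ, true_and]
  constructor
  · rintro ⟨hj, hji⟩; exact ⟨(hP j hj).2 hji, (hF j).1 hj⟩
  · rintro ⟨hj, hjS⟩; exact ⟨(hF j).2 hjS, (hP j ((hF j).2 hjS)).1 hj⟩

theorem exists_ne_zero_row_sums_eq_zero (S : AddSubgroup 𝕜) {x : ι → 𝕜} (hx : ∃ i, x i ∉ S)
    (P₁ : α → ι → Prop) (P₂ : β → ι → Prop) [∀ a, DecidablePred (P₁ a)]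
    [∀ b, DecidablePred (P₂ b)] (r₁ : ι → α) (r₂ : ι → β)
    (h₁ : ∀ i a, x i ∉ S → (P₁ a i ↔ r₁ i = a)) (h₂ : ∀ i b, x i ∉ S → (P₂ b i ↔ r₂ i = b)) :
    ∃ d : ι → 𝕜, d ≠ 0 ∧ (∀ i, x i ∈ S → d i = 0) ∧
      (∀ a, ∑ i, (if P₁ a i then x i else 0) ∈ S → ∑ i, (if P₁ a i then d i else 0) = 0) ∧
      ∀ b, ∑ i, (if P₂ b i then x i else 0) ∈ S → ∑ i, (if P₂ b i then d i else 0) = 0 := by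
  classical
  set F : Finset ι := {i | x i ∉ S}
  have hF : ∀ i, i ∈ F ↔ x i ∉ S := by simp [F]
  have hP₁ : ∀ a, ∀ i ∈ F, P₁ a i ↔ r₁ i = a := fun a i hi ↦ h₁ i a ((hF i).1 hi)
  have hP₂ : ∀ b, ∀ i ∈ F, P₂ b i ↔ r₂ i = b := fun b i hi ↦ h₂ i b ((hF i).1 hi)
  obtain ⟨d, hd, hdF, hdA, hdB⟩ := exists_ne_zero_fiber_sums_eq_zero (𝕜 := 𝕜)
    (let ⟨i, hi⟩ := hx; ⟨i, (hF i).2 hi⟩) r₁ r₂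
    (A := {a ∈ F.image r₁ | ∑ i, (if P₁ a i then x i else 0) ∈ S})
    (B := {b ∈ F.image r₂ | ∑ i, (if P₂ b i then x i else 0) ∈ S})
    (fun a ha ↦ two_le_card_fiber_of_sum_mem S hF (hP₁ a) (mem_filter.1 ha).1 (mem_filter.1 ha).2)
    (fun b hb ↦ two_le_card_fiber_of_sum_mem S hF (hP₂ b) (mem_filter.1 hb).1 (mem_filter.1 hb).2)
  refine ⟨d, hd, fun i hi ↦ hdF i fun h ↦ (hF i).1 h hi, fun a ha ↦ ?_, fun b hb ↦ ?_⟩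
  · rw [sum_ite_eq_sum_fiber hdF (hP₁ a)]
    by_cases ha' : a ∈ F.image r₁
    · exact hdA a (mem_filter.2 ⟨ha', ha⟩)
    · exact sum_eq_zero fun i hi ↦ (ha' (mem_image.2 ⟨i, mem_filter.1 hi⟩)).elim
  · rw [sum_ite_eq_sum_fiber hdF (hP₂ b)]
    by_cases hb' : b ∈ F.image r₂
    · exact hdB b (mem_filter.2 ⟨hb', hb⟩)
    · exact sum_eq_zero fun i hi ↦ (hb' (mem_image.2 ⟨i, mem_filter.1 hi⟩)).elim

end Rows

theorem Set.eq_zero_of_add_mem_of_sub_mem_of_mem_extremePoints {E : Type*} [AddCommGroup E]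
    [Module ℝ E] {s : Set E} {x v : E} (hx : x ∈ s.extremePoints ℝ) (hadd : x + v ∈ s)
    (hsub : x - v ∈ s) : v = 0 := by
  have hseg : x ∈ openSegment ℝ (x + v) (x - v) :=
    ⟨1 / 2, 1 / 2, by norm_num, by norm_num, by norm_num, by module⟩
  simpa using (mem_extremePoints.1 hx).2 _ hadd _ hsub hseg |>.1

section Polyhedron

variable {J ι : Type*} [Finite J] [Fintype ι] {M : Matrix J ι ℝ} {b : J → ℝ} {x d : ι → ℝ}

theorem Matrix.eventually_le_mulVec_add_smul (hx : b ≤ M *ᵥ x)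
    (htight : ∀ j, (M *ᵥ x) j = b j → (M *ᵥ d) j = 0) :
    ∀ᶠ t in 𝓝 (0 : ℝ), b ≤ M *ᵥ (x + t • d) := by
  simp only [Pi.le_def, mulVec_add, mulVec_smul, Pi.add_apply, Pi.smul_apply, smul_eq_mul]
  refine eventually_all.2 fun j ↦ ?_
  rcases (hx j).eq_or_lt with hj | hj
  · simp [htight j hj.symm, hj]
  · have : Tendsto (fun t : ℝ ↦ (M *ᵥ x) j + t * (M *ᵥ d) j) (𝓝 0) (𝓝 ((M *ᵥ x) j)) :=
      (by fun_prop : Continuous fun t : ℝ ↦ (M *ᵥ x) j + t * (M *ᵥ d) j).tendsto' 0 _ (by simp)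
    exact (this.eventually (lt_mem_nhds hj)).mono fun _ ↦ le_of_lt

theorem Matrix.notMem_extremePoints_of_mulVec_eq_zero_of_tight (hx : b ≤ M *ᵥ x) (hd : d ≠ 0)
    (htight : ∀ j, (M *ᵥ x) j = b j → (M *ᵥ d) j = 0) :
    x ∉ Set.extremePoints ℝ {y | b ≤ M *ᵥ y} := by
  intro hext
  obtain ⟨ε, hε, hball⟩ :=
    Metric.eventually_nhds_iff_ball.1 (eventually_le_mulVec_add_smul hx htight)
  have hmem : ∀ t : ℝ, |t| = ε / 2 → t ∈ Metric.ball 0 ε := fun t ht ↦ by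
    rw [Metric.mem_ball, dist_zero_right, Real.norm_eq_abs, ht]
    linarith
  have hε2 : |ε / 2| = ε / 2 := abs_of_pos (by positivity)
  have hzero := Set.eq_zero_of_add_mem_of_sub_mem_of_mem_extremePoints hext
    (hball _ (hmem _ hε2))
    (by simpa [sub_eq_add_neg] using hball _ (hmem _ ((abs_neg _).trans hε2)))
  exact hd ((smul_eq_zero.1 hzero).resolve_left (by positivity))

end Polyhedron

namespace StabIdx

variable {V K : Type*} [Fintype V] [DecidableEq V] [Fintype K] [DecidableEq K]
  (G : SimpleGraph V) (Vset : K → Finset V)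

/-- The constraints of `scFeas` written as `lpRhs ≤ lpMatrix *ᵥ x`: one row per variable
(nonnegativity), per vertex (covering) and per color (capacity, with its sign flipped). -/
def lpMatrix : Matrix (StabIdx G Vset ⊕ V ⊕ K) (StabIdx G Vset) ℝ :=
  fromRows 1 <| fromRows (.of fun v p ↦ if v ∈ p.1.1 then 1 else 0)
    (.of fun k p ↦ if p.1.2 = k then -1 else 0)

def lpRhs (m : K → ℕ) : StabIdx G Vset ⊕ V ⊕ K → ℝ :=
  Sum.elim 0 <| Sum.elim 1 fun k ↦ -(m k : ℝ)

variable {G Vset}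

@[simp] theorem lpMatrix_mulVec_inl (x : StabIdx G Vset → ℝ) (p : StabIdx G Vset) :
    (lpMatrix G Vset *ᵥ x) (.inl p) = x p := by
  simp [lpMatrix]

@[simp] theorem lpMatrix_mulVec_inr_inl (x : StabIdx G Vset → ℝ) (v : V) :
    (lpMatrix G Vset *ᵥ x) (.inr (.inl v)) =
      ∑ p : StabIdx G Vset, if v ∈ p.1.1 then x p else 0 := by
  simp [lpMatrix, mulVec, dotProduct]

@[simp] theorem lpMatrix_mulVec_inr_inr (x : StabIdx G Vset → ℝ) (k : K) :
    (lpMatrix G Vset *ᵥ x) (.inr (.inr k)) =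
      -∑ p : StabIdx G Vset, if p.1.2 = k then x p else 0 := by
  simp [lpMatrix, mulVec, dotProduct, ← sum_neg_distrib, apply_ite]

theorem scFeas_eq_setOf_lpRhs_le (m : K → ℕ) :
    scFeas G Vset m = {x | lpRhs G Vset m ≤ lpMatrix G Vset *ᵥ x} := by
  ext x
  simp [scFeas, Pi.le_def, lpRhs]

theorem exists_ne_zero_tight_of_fractional_singletons (m : K → ℕ) {x : StabIdx G Vset → ℝ}
    (hfrac : ∃ p, ¬ ∃ z : ℤ, x p = z)
    (hsingle : ∀ p : StabIdx G Vset, (¬ ∃ z : ℤ, x p = z) → #p.1.1 = 1) :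
    ∃ d, d ≠ 0 ∧
      ∀ j, (lpMatrix G Vset *ᵥ x) j = lpRhs G Vset m j → (lpMatrix G Vset *ᵥ d) j = 0 := by
  set S := (Int.castAddHom ℝ).range
  have hS : ∀ r : ℝ, r ∈ S ↔ ∃ z : ℤ, r = z := fun r ↦ by
    simp only [S, AddMonoidHom.mem_range, Int.coe_castAddHom, eq_comm]
  choose r₁ hr₁ using fun p : StabIdx G Vset ↦ p.2.1
  have h₁ : ∀ p v, x p ∉ S → (v ∈ p.1.1 ↔ r₁ p = v) := fun p v hp ↦ by
    obtain ⟨a, ha⟩ := card_eq_one.1 (hsingle p ((hS _).not.1 hp))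
    have := hr₁ p
    rw [ha, mem_singleton] at this ⊢
    rw [this, eq_comm]
  obtain ⟨d, hd, hdS, hdV, hdK⟩ := exists_ne_zero_row_sums_eq_zero S
    (by simpa only [hS] using hfrac) (fun v p ↦ v ∈ p.1.1) (fun k p ↦ p.1.2 = k) r₁ (·.1.2) h₁
    fun _ _ _ ↦ Iff.rfl
  refine ⟨d, hd, ?_⟩
  rintro (p | v | k) h <;>
    simp only [lpMatrix_mulVec_inl, lpMatrix_mulVec_inr_inl, lpMatrix_mulVec_inr_inr, lpRhs,
      Sum.elim_inl, Sum.elim_inr, Pi.zero_apply, Pi.one_apply, neg_inj, neg_eq_zero] at h ⊢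
  · exact hdS p (h ▸ zero_mem S)
  · exact hdV v (h ▸ (hS 1).2 ⟨1, by simp⟩)
  · exact hdK k (h ▸ (hS _).2 ⟨m k, by simp⟩)

end StabIdx

open StabIdx in
theorem stmt_18_general {V K : Type*} [Fintype V] [DecidableEq V] [Fintype K] [DecidableEq K]
    (G : SimpleGraph V) (Vset : K → Finset V) (m : K → ℕ)
    (x : StabIdx G Vset → ℝ)
    (hfeas : x ∈ scFeas G Vset m)
    (hbasic : x ∈ Set.extremePoints ℝ (scFeas G Vset m))
    (hfrac : ∃ p : StabIdx G Vset, ¬ ∃ z : ℤ, x p = (z : ℝ)) :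
    ∃ p : StabIdx G Vset, 2 ≤ p.1.1.card ∧ ¬ ∃ z : ℤ, x p = (z : ℝ) := by
  by_contra! hint
  have hsingle : ∀ p : StabIdx G Vset, (¬ ∃ z : ℤ, x p = z) → #p.1.1 = 1 := fun p hp ↦
    le_antisymm (Nat.le_of_lt_succ <| not_le.1 fun h ↦ hp (hint p h)) (card_pos.2 p.2.1)
  obtain ⟨d, hd, htight⟩ := exists_ne_zero_tight_of_fractional_singletons m hfrac hsingle
  rw [scFeas_eq_setOf_lpRhs_le] at hfeas hbasic
  exact Matrix.notMem_extremePoints_of_mulVec_eq_zero_of_tight hfeas hd htight hbasic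

/-- A basic (extreme-point) optimal solution of `LR` with some fractional component has a
fractional component indexed by a stable set of size at least 2. -/
theorem stmt_18 {V K : Type*} [Fintype V] [DecidableEq V] [Fintype K] [DecidableEq K]
    (G : SimpleGraph V) (Vset : K → Finset V) (m : K → ℕ) (w : K → ℕ)
    (x : StabIdx G Vset → ℝ)
    (hfeas : x ∈ scFeas G Vset m)
    (hbasic : x ∈ Set.extremePoints ℝ (scFeas G Vset m))
    (hopt : ∀ y ∈ scFeas G Vset m, scObj G Vset w x ≤ scObj G Vset w y)
    (hfrac : ∃ p : StabIdx G Vset, ¬ ∃ z : ℤ, x p = (z : ℝ)) :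
    ∃ p : StabIdx G Vset, 2 ≤ p.1.1.card ∧ ¬ ∃ z : ℤ, x p = (z : ℝ) :=
  stmt_18_general G Vset m x hfeas hbasic hfrac
end
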